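/- Let X be a complete separable metric space, φ a regularity kernel, (Ω, 𝒜, P) a probability space, B : Ω → Set X a random set, and for each k ∈ ℕ let 𝒬_k be a countable family of pairwise disjoint Borel subsets of X with {ω : B(ω) ∩ Q ≠ ∅} measurable and P(B ∩ Q ≠ ∅) > 0 for every Q ∈ 𝒬_k. Assume: (1) there exists a > 0 with a · C_φ(Q) ≤ P(B ∩ Q ≠ ∅) for every Q ∈ 𝒬_k and every k; (2) there exist δ > 0 and c₂, c₃ < ∞ with φ(r) ≤ c₂ · φ(r(1+2δ)) + c₃ for all r > 0; (3) there exists c < ∞ such that whenever Q ∈ 𝒬_k, S ∈ 𝒬_n and max(diam Q, diam S) < δ · dist(Q, S), then P(B ∩ Q ≠ ∅ and B ∩ S ≠ ∅) ≤ c · P(B ∩ Q ≠ ∅) · P(B ∩ S ≠ ∅) · φ(dist(Q, S)); (4) there exists M_δ < ∞ such that for every k and every Q ∈ 𝒬_k, the set {S ∈ 𝒬_k : max(diam Q, diam S) ≥ δ · dist(Q, S)} has at most M_δ elements. Then for every finite Borel measure ν on X and every k ∈ ℕ, E( 𝒞_k(ν)(X)² ) ≤ (c·c₂ + 2·a^{-1}·M_δ)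 · I_φ(ν) + c·c₃·ν(X)². -/

import Mathlib

open MeasureTheory Filter Set Topology Classical

/-- The `φ`-energy of a Borel measure: `I_φ(ν) = ∫∫ φ(d(x,y)) dν(x) dν(y)`. -/
noncomputable def phiEnergy {X : Type*} [MetricSpace X] [MeasurableSpace X]
    (φ : ℝ → ENNReal) (ν : Measure X) : ENNReal :=
  ∫⁻ x, ∫⁻ y, φ (dist x y) ∂ν ∂ν

/-- The `φ`-capacity of a set `K`: the supremum of `I_φ(τ)⁻¹` over Borel probability
measures `τ` supported in `K` (value `0` if there is no such measure). -/
noncomputable def phiCapacity {X : Type*} [MetricSpace X] [MeasurableSpace X]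
    (φ : ℝ → ENNReal) (K : Set X) : ENNReal :=
  ⨆ (τ : Measure X) (_ : IsProbabilityMeasure τ) (_ : τ Kᶜ = 0), (phiEnergy φ τ)⁻¹

/-- The (extended) distance between two sets: `inf {edist x y : x ∈ Q, y ∈ S}`. -/
noncomputable def setEDist {X : Type*} [PseudoEMetricSpace X] (Q S : Set X) : ENNReal :=
  ⨅ (x ∈ Q) (y ∈ S), edist x y

/-- `𝒞_k(ν)(A)(ω) = Σ_{Q ∈ 𝒬} P(B∩Q≠∅)⁻¹ · 1_{B(ω)∩Q≠∅} · ν(Q∩A)`, the conditional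
measure approximation associated with a family `𝒬` of sets. -/
noncomputable def condCk {X Ω : Type*} [MeasurableSpace X] [MeasurableSpace Ω]
    (P : Measure Ω) (B : Ω → Set X) (𝒬 : Set (Set X)) (ν : Measure X) (A : Set X)
    (ω : Ω) : ENNReal :=
  ∑' Q : 𝒬, (P {ω' | (B ω' ∩ (Q : Set X)).Nonempty})⁻¹ *
    (if (B ω ∩ (Q : Set X)).Nonempty then ν ((Q : Set X) ∩ A) else 0)

/-!
Expanding the square, `E 𝒞_k(ν)(X)²` is the double sum over `Q, S ∈ 𝒬_k` of
`P(B hits Q and S) ν(Q) ν(S) / (P(B hits Q) P(B hits S))`. For a `δ`-far pair every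
`x ∈ Q, y ∈ S` has `d(x, y) ≤ (1 + 2δ) dist(Q, S)`, so the correlation bound and the kernel
inequality make the term at most `c c₂ ∫_Q ∫_S φ + c c₃ ν(Q) ν(S)`. For a `δ`-near pair the joint
hitting probability is at most either marginal, so the term is at most
`P(B hits Q)⁻¹ ν(Q)² + P(B hits S)⁻¹ ν(S)²`; testing the capacity of `Q` against the normalised
restriction `ν(Q)⁻¹ • ν|_Q` bounds `P(B hits Q)⁻¹ ν(Q)²` by `a⁻¹ ∫_Q ∫_X φ`, and every `Q` has at
most `M_δ` near partners. Disjointness of `𝒬_k` turns the sums of local energies into `I_φ(ν)`.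
-/

open scoped ENNReal NNReal

section Sums

variable {α ι : Type*} [MeasurableSpace α] {μ : Measure α}

theorem tsum_lintegral_le_lintegral_tsum (f : ι → α → ℝ≥0∞) :
    ∑' i, ∫⁻ x, f i x ∂μ ≤ ∫⁻ x, ∑' i, f i x ∂μ := by
  refine ENNReal.summable.tsum_le_of_sum_le fun s => ?_
  calc ∑ i ∈ s, ∫⁻ x, f i x ∂μ ≤ ∫⁻ x, ∑ i ∈ s, f i x ∂μ := by
        induction s using Finset.induction_on with
        | empty => simp
        | insert i s hi ih =>
          simp only [Finset.sum_insert hi]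
          exact (add_le_add_right ih _).trans (le_lintegral_add _ _)
    _ ≤ ∫⁻ x, ∑' i, f i x ∂μ := lintegral_mono fun x => ENNReal.sum_le_tsum s

variable {𝒬 : Set (Set α)}

theorem tsum_setLIntegral_le_lintegral (h𝒬 : 𝒬.Countable) (hm : ∀ Q ∈ 𝒬, MeasurableSet Q)
    (hd : 𝒬.PairwiseDisjoint id) (f : α → ℝ≥0∞) :
    ∑' Q : 𝒬, ∫⁻ x in Q, f x ∂μ ≤ ∫⁻ x, f x ∂μ :=
  (lintegral_biUnion h𝒬 hm hd f).symm.le.trans (setLIntegral_le_lintegral _ _)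

theorem tsum_measure_le_measure_univ_of_pairwiseDisjoint (h𝒬 : 𝒬.Countable)
    (hm : ∀ Q ∈ 𝒬, MeasurableSet Q) (hd : 𝒬.PairwiseDisjoint id) :
    ∑' Q : 𝒬, μ Q ≤ μ univ := by
  simpa using tsum_setLIntegral_le_lintegral (μ := μ) h𝒬 hm hd 1

theorem tsum_tsum_setLIntegral_setLIntegral_le (h𝒬 : 𝒬.Countable)
    (hm : ∀ Q ∈ 𝒬, MeasurableSet Q) (hd : 𝒬.PairwiseDisjoint id) (f : α → α → ℝ≥0∞) :
    ∑' (Q : 𝒬) (S : 𝒬), ∫⁻ x in Q, ∫⁻ y in S, f x y ∂μ ∂μ ≤ ∫⁻ x, ∫⁻ y, f x y ∂μ ∂μ := by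
  calc ∑' (Q : 𝒬) (S : 𝒬), ∫⁻ x in Q, ∫⁻ y in S, f x y ∂μ ∂μ
      ≤ ∑' Q : 𝒬, ∫⁻ x in Q, ∑' S : 𝒬, ∫⁻ y in S, f x y ∂μ ∂μ :=
        ENNReal.tsum_le_tsum fun Q => tsum_lintegral_le_lintegral_tsum _
    _ ≤ ∑' Q : 𝒬, ∫⁻ x in Q, ∫⁻ y, f x y ∂μ ∂μ :=
        ENNReal.tsum_le_tsum fun Q => lintegral_mono fun x =>
          tsum_setLIntegral_le_lintegral h𝒬 hm hd _
    _ ≤ ∫⁻ x, ∫⁻ y, f x y ∂μ ∂μ := tsum_setLIntegral_le_lintegral h𝒬 hm hd _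

end Sums

theorem tsum_ite_le_of_encard_le {ι : Type*} (p : ι → Prop) {M : ℕ}
    (hM : {i | p i}.encard ≤ M) (x : ℝ≥0∞) :
    ∑' i, (if p i then x else 0) ≤ M * x := by
  calc ∑' i, (if p i then x else 0) = ∑' i : {i | p i}, x := by
        rw [tsum_subtype {i | p i} fun _ => x]; rfl
    _ = {i | p i}.encard * x := ENNReal.tsum_const x
    _ ≤ M * x := by gcongr; exact_mod_cast ENat.toENNReal_le.mpr hM

theorem tsum_tsum_ite_add_le {ι : Type*} {R : ι → ι → Prop} (hR : ∀ i j, R i j → R j i) {M : ℕ}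
    (hM : ∀ i, {j | R i j}.encard ≤ M) (w : ι → ℝ≥0∞) :
    ∑' (i) (j), (if R i j then w i + w j else 0) ≤ 2 * M * ∑' i, w i := by
  have hfiber : ∀ i, ∑' j, (if R i j then w i else 0) ≤ M * w i :=
    fun i => tsum_ite_le_of_encard_le _ (hM i) _
  calc ∑' (i) (j), (if R i j then w i + w j else 0)
      = ∑' (i) (j), (if R i j then w i else 0) + ∑' (j) (i), (if R j i then w j else 0) := by
        simp only [ite_add_zero, ENNReal.tsum_add]
        rw [ENNReal.tsum_comm (f := fun i j => if R i j then w j else 0)]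
        exact congrArg₂ _ rfl (tsum_congr fun j => tsum_congr fun i =>
          if_congr ⟨hR i j, hR j i⟩ rfl rfl)
    _ ≤ ∑' i, M * w i + ∑' j, M * w j := by gcongr with i j <;> exact hfiber _
    _ = 2 * M * ∑' i, w i := by rw [ENNReal.tsum_mul_left]; ring

section Capacity

variable {X : Type*} [MetricSpace X] [MeasurableSpace X] (φ : ℝ → ℝ≥0∞)

theorem phiEnergy_smul (μ : Measure X) {c : ℝ≥0∞} (hc : c ≠ ⊤) :
    phiEnergy φ (c • μ) = c ^ 2 * phiEnergy φ μ := by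
  simp only [phiEnergy, lintegral_smul_measure, smul_eq_mul]
  rw [lintegral_const_mul' _ _ hc, pow_two, mul_assoc]

theorem inv_phiEnergy_le_phiCapacity {K : Set X} (τ : Measure X) [IsProbabilityMeasure τ]
    (hτ : τ Kᶜ = 0) : (phiEnergy φ τ)⁻¹ ≤ phiCapacity φ K :=
  le_iSup₂_of_le τ ‹_› (le_iSup_of_le hτ le_rfl)

theorem inv_mul_measure_sq_le_of_mul_phiCapacity_le (ν : Measure X) [IsFiniteMeasure ν]
    {Q : Set X} (hQ : MeasurableSet Q) {a : ℝ≥0} (ha : a ≠ 0) {p : ℝ≥0∞}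
    (hcap : a * phiCapacity φ Q ≤ p) :
    p⁻¹ * ν Q ^ 2 ≤ (a : ℝ≥0∞)⁻¹ * phiEnergy φ (ν.restrict Q) := by
  rcases eq_or_ne (ν Q) 0 with hν | hν
  · simp [hν]
  set τ : Measure X := (ν Q)⁻¹ • ν.restrict Q
  have hτ_prob : IsProbabilityMeasure τ :=
    ⟨by simp [τ, ENNReal.inv_mul_cancel hν (measure_ne_top ν Q)]⟩
  have hτ_supp : τ Qᶜ = 0 := by simp [τ, Measure.restrict_apply hQ.compl]
  have hp : p⁻¹ ≤ (a : ℝ≥0∞)⁻¹ * phiEnergy φ τ := by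
    have := ENNReal.inv_le_inv.mpr
      ((mul_le_mul_right (inv_phiEnergy_le_phiCapacity φ τ hτ_supp) _).trans hcap)
    rwa [ENNReal.mul_inv (Or.inl (by exact_mod_cast ha)) (Or.inl ENNReal.coe_ne_top),
      inv_inv] at this
  calc p⁻¹ * ν Q ^ 2 ≤ (a : ℝ≥0∞)⁻¹ * phiEnergy φ τ * ν Q ^ 2 := by gcongr
    _ = (a : ℝ≥0∞)⁻¹ * phiEnergy φ (ν.restrict Q) * ((ν Q)⁻¹ * ν Q) ^ 2 := by
        rw [phiEnergy_smul φ _ (ENNReal.inv_ne_top.mpr hν)]; ring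
    _ = (a : ℝ≥0∞)⁻¹ * phiEnergy φ (ν.restrict Q) := by
        rw [ENNReal.inv_mul_cancel hν (measure_ne_top ν Q), one_pow, mul_one]

theorem phiEnergy_restrict_le (ν : Measure X) (Q : Set X) :
    phiEnergy φ (ν.restrict Q) ≤ ∫⁻ x in Q, ∫⁻ y, φ (dist x y) ∂ν ∂ν :=
  lintegral_mono fun _ => lintegral_mono' Measure.restrict_le_self le_rfl

end Capacity

section Geometry

variable {X : Type*} [PseudoEMetricSpace X]

theorem setEDist_comm (Q S : Set X) : setEDist Q S = setEDist S Q := by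
  unfold setEDist
  rw [iInf₂_comm]
  simp_rw [edist_comm]

theorem setEDist_le_edist {Q S : Set X} {x y : X} (hx : x ∈ Q) (hy : y ∈ S) :
    setEDist Q S ≤ edist x y :=
  iInf₂_le_of_le x hx (iInf₂_le y hy)

theorem edist_le_setEDist_add_diam {Q S : Set X} {x y : X} (hx : x ∈ Q) (hy : y ∈ S) :
    edist x y ≤ setEDist Q S + (Metric.ediam Q + Metric.ediam S) := by
  rw [← tsub_le_iff_right]
  refine le_iInf₂ fun x' hx' => le_iInf₂ fun y' hy' => tsub_le_iff_right.mpr ?_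
  calc edist x y ≤ edist x x' + edist x' y' + edist y' y := edist_triangle4 x x' y' y
    _ ≤ Metric.ediam Q + edist x' y' + Metric.ediam S := by
        gcongr
        · exact Metric.edist_le_ediam_of_mem hx hx'
        · exact Metric.edist_le_ediam_of_mem hy' hy
    _ = edist x' y' + (Metric.ediam Q + Metric.ediam S) := by ring

def IsNearPair (δ : ℝ) (Q S : Set X) : Prop :=
  ENNReal.ofReal δ * setEDist Q S ≤ max (Metric.ediam Q) (Metric.ediam S)

theorem IsNearPair.symm {δ : ℝ} {Q S : Set X} (h : IsNearPair δ Q S) : IsNearPair δ S Q := by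
  rwa [IsNearPair, setEDist_comm, max_comm]

end Geometry

theorem inv_mul_inv_mul_le_add_of_le {pQ pS j m n : ℝ≥0∞} (hQ : j ≤ pQ) (hS : j ≤ pS) :
    pQ⁻¹ * pS⁻¹ * j * m * n ≤ pQ⁻¹ * m ^ 2 + pS⁻¹ * n ^ 2 := by
  rcases le_total m n with h | h
  · calc pQ⁻¹ * pS⁻¹ * j * m * n ≤ pQ⁻¹ * pS⁻¹ * pQ * n * n := by gcongr
      _ = pQ⁻¹ * pQ * (pS⁻¹ * n ^ 2) := by ring
      _ ≤ pS⁻¹ * n ^ 2 := mul_le_of_le_one_left' (ENNReal.inv_mul_le_one pQ)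
      _ ≤ _ := le_add_self
  · calc pQ⁻¹ * pS⁻¹ * j * m * n ≤ pQ⁻¹ * pS⁻¹ * pS * m * m := by gcongr
      _ = pS⁻¹ * pS * (pQ⁻¹ * m ^ 2) := by ring
      _ ≤ pQ⁻¹ * m ^ 2 := mul_le_of_le_one_left' (ENNReal.inv_mul_le_one pS)
      _ ≤ _ := le_self_add

section Far

variable {X : Type*} [PseudoMetricSpace X] {δ : ℝ} {Q S : Set X}

theorem ofReal_mul_setEDist_ne_zero_of_not_isNearPair (hfar : ¬IsNearPair δ Q S) :
    ENNReal.ofReal δ * setEDist Q S ≠ 0 :=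
  (bot_le.trans_lt (not_le.mp hfar)).ne'

theorem setEDist_toReal_pos_of_not_isNearPair (hfar : ¬IsNearPair δ Q S) {x y : X}
    (hx : x ∈ Q) (hy : y ∈ S) : 0 < (setEDist Q S).toReal :=
  ENNReal.toReal_pos (right_ne_zero_of_mul (ofReal_mul_setEDist_ne_zero_of_not_isNearPair hfar))
    (ne_top_of_le_ne_top (edist_ne_top x y) (setEDist_le_edist hx hy))

theorem dist_le_setEDist_mul_of_not_isNearPair (hfar : ¬IsNearPair δ Q S) {x y : X}
    (hx : x ∈ Q) (hy : y ∈ S) : dist x y ≤ (setEDist Q S).toReal * (1 + 2 * δ) := by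
  have hδ : 0 < δ := ENNReal.ofReal_pos.mp
    (pos_of_ne_zero (left_ne_zero_of_mul (ofReal_mul_setEDist_ne_zero_of_not_isNearPair hfar)))
  set D := setEDist Q S
  have hD : D ≠ ⊤ := ne_top_of_le_ne_top (edist_ne_top x y) (setEDist_le_edist hx hy)
  rw [IsNearPair, not_le] at hfar
  have hedist : edist x y ≤ D + 2 * (ENNReal.ofReal δ * D) :=
    calc edist x y ≤ D + (Metric.ediam Q + Metric.ediam S) := edist_le_setEDist_add_diam hx hy
      _ ≤ D + 2 * (ENNReal.ofReal δ * D) := by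
        rw [two_mul]
        gcongr
        exacts [(le_max_left _ _).trans hfar.le, (le_max_right _ _).trans hfar.le]
  calc dist x y = (edist x y).toReal := dist_edist x y
    _ ≤ (D + 2 * (ENNReal.ofReal δ * D)).toReal := ENNReal.toReal_mono (by finiteness) hedist
    _ = D.toReal * (1 + 2 * δ) := by
        rw [ENNReal.toReal_add hD (by finiteness), ENNReal.toReal_mul, ENNReal.toReal_mul,
          ENNReal.toReal_ofReal hδ.le, ENNReal.toReal_ofNat]
        ring

end Far

theorem mul_measure_mul_le_setLIntegral_setLIntegral {α β : Type*} [MeasurableSpace α]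
    [MeasurableSpace β] (μ : Measure α) (ν : Measure β) {Q : Set α} {S : Set β}
    (hQ : MeasurableSet Q) (hS : MeasurableSet S) {f : α → β → ℝ≥0∞} {r : ℝ≥0∞}
    (h : ∀ x ∈ Q, ∀ y ∈ S, r ≤ f x y) :
    r * (μ Q * ν S) ≤ ∫⁻ x in Q, ∫⁻ y in S, f x y ∂ν ∂μ :=
  calc r * (μ Q * ν S) = ∫⁻ _ in Q, ∫⁻ _ in S, r ∂ν ∂μ := by simp only [setLIntegral_const]; ring
    _ ≤ ∫⁻ x in Q, ∫⁻ y in S, f x y ∂ν ∂μ :=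
      setLIntegral_mono' hQ fun x hx => setLIntegral_mono' hS (h x hx)

theorem inv_mul_inv_mul_le_of_not_isNearPair {X : Type*} [PseudoMetricSpace X]
    [MeasurableSpace X] (ν : Measure X) {φ : ℝ → ℝ≥0∞} (hφ : AntitoneOn φ (Ici 0))
    {δ : ℝ} {c₂ c₃ : ℝ≥0∞} (hker : ∀ r : ℝ, 0 < r → φ r ≤ c₂ * φ (r * (1 + 2 * δ)) + c₃)
    {Q S : Set X} (hQ : MeasurableSet Q) (hS : MeasurableSet S) (hfar : ¬IsNearPair δ Q S)
    {c pQ pS j : ℝ≥0∞} (hj : j ≤ c * pQ * pS * φ (setEDist Q S).toReal) :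
    pQ⁻¹ * pS⁻¹ * j * ν Q * ν S
      ≤ c * c₂ * ∫⁻ x in Q, ∫⁻ y in S, φ (dist x y) ∂ν ∂ν + c * c₃ * (ν Q * ν S) := by
  rcases Q.eq_empty_or_nonempty with rfl | ⟨x₀, hx₀⟩
  · simp
  rcases S.eq_empty_or_nonempty with rfl | ⟨y₀, hy₀⟩
  · simp
  set D := (setEDist Q S).toReal
  have hD : 0 < D := setEDist_toReal_pos_of_not_isNearPair hfar hx₀ hy₀
  have hr : 0 ≤ D * (1 + 2 * δ) :=
    dist_nonneg.trans (dist_le_setEDist_mul_of_not_isNearPair hfar hx₀ hy₀)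
  have henergy : φ (D * (1 + 2 * δ)) * (ν Q * ν S)
      ≤ ∫⁻ x in Q, ∫⁻ y in S, φ (dist x y) ∂ν ∂ν :=
    mul_measure_mul_le_setLIntegral_setLIntegral ν ν hQ hS fun x hx y hy =>
      hφ dist_nonneg hr (dist_le_setEDist_mul_of_not_isNearPair hfar hx hy)
  calc pQ⁻¹ * pS⁻¹ * j * ν Q * ν S ≤ pQ⁻¹ * pS⁻¹ * (c * pQ * pS * φ D) * ν Q * ν S := by gcongr
    _ = pQ⁻¹ * pQ * (pS⁻¹ * pS) * (c * φ D * (ν Q * ν S)) := by ring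
    _ ≤ c * φ D * (ν Q * ν S) :=
        mul_le_of_le_one_left' (mul_le_one' (ENNReal.inv_mul_le_one _) (ENNReal.inv_mul_le_one _))
    _ ≤ c * (c₂ * φ (D * (1 + 2 * δ)) + c₃) * (ν Q * ν S) := by gcongr; exact hker D hD
    _ = c * c₂ * (φ (D * (1 + 2 * δ)) * (ν Q * ν S)) + c * c₃ * (ν Q * ν S) := by ring
    _ ≤ _ := by gcongr

section Expansion

variable {X Ω : Type*} [MeasurableSpace X] [MeasurableSpace Ω]

def hitProb (P : Measure Ω) (B : Ω → Set X) (Q : Set X) : ℝ≥0∞ :=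
  P {ω | (B ω ∩ Q).Nonempty}

theorem lintegral_condCk_sq (P : Measure Ω) (B : Ω → Set X) {𝒬 : Set (Set X)}
    (h𝒬 : 𝒬.Countable) (hhit : ∀ Q ∈ 𝒬, MeasurableSet {ω | (B ω ∩ Q).Nonempty})
    (ν : Measure X) (A : Set X) :
    ∫⁻ ω, condCk P B 𝒬 ν A ω ^ 2 ∂P
      = ∑' (Q : 𝒬) (S : 𝒬), (hitProb P B Q)⁻¹ * (hitProb P B S)⁻¹ *
          P {ω | (B ω ∩ Q).Nonempty ∧ (B ω ∩ S).Nonempty} * ν (Q ∩ A) * ν (S ∩ A) := by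
  have : Countable 𝒬 := h𝒬.to_subtype
  set f : 𝒬 → Ω → ℝ≥0∞ := fun Q =>
    {ω | (B ω ∩ Q).Nonempty}.indicator fun _ => (hitProb P B Q)⁻¹ * ν (Q ∩ A)
  have hf : ∀ Q, Measurable (f Q) := fun Q => measurable_const.indicator (hhit Q Q.2)
  have hsq : ∀ ω, condCk P B 𝒬 ν A ω ^ 2 = ∑' (Q : 𝒬) (S : 𝒬), f Q ω * f S ω := by
    intro ω
    have hcondCk : condCk P B 𝒬 ν A ω = ∑' Q, f Q ω :=
      tsum_congr fun Q => by simp [f, Set.indicator_apply, mul_ite, hitProb]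
    rw [hcondCk, sq, ← ENNReal.tsum_mul_right]
    simp_rw [← ENNReal.tsum_mul_left]
  rw [lintegral_congr hsq]
  refine (lintegral_tsum fun Q =>
    (Measurable.tsum fun S => (hf Q).mul (hf S)).aemeasurable).trans (tsum_congr fun Q => ?_)
  refine (lintegral_tsum fun S =>
    ((hf Q).mul (hf S)).aemeasurable).trans (tsum_congr fun S => ?_)
  simp only [Pi.mul_apply, f, ← Set.inter_indicator_mul]
  rw [lintegral_indicator_const ((hhit Q Q.2).inter (hhit S S.2)), ← Set.ofPred_and]
  ring

end Expansion

theorem inv_mul_inv_mul_le_add_add_ite {X : Type*} [PseudoMetricSpace X] [MeasurableSpace X]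
    (ν : Measure X) {φ : ℝ → ℝ≥0∞} (hφ : AntitoneOn φ (Ici 0))
    {δ : ℝ} {c₂ c₃ : ℝ≥0∞} (hker : ∀ r : ℝ, 0 < r → φ r ≤ c₂ * φ (r * (1 + 2 * δ)) + c₃)
    {Q S : Set X} (hQ : MeasurableSet Q) (hS : MeasurableSet S) {c pQ pS j : ℝ≥0∞}
    (hjQ : j ≤ pQ) (hjS : j ≤ pS)
    (hfar : ¬IsNearPair δ Q S → j ≤ c * pQ * pS * φ (setEDist Q S).toReal) :
    pQ⁻¹ * pS⁻¹ * j * ν Q * ν S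
      ≤ c * c₂ * ∫⁻ x in Q, ∫⁻ y in S, φ (dist x y) ∂ν ∂ν + c * c₃ * (ν Q * ν S)
        + if IsNearPair δ Q S then pQ⁻¹ * ν Q ^ 2 + pS⁻¹ * ν S ^ 2 else 0 := by
  split_ifs with hnear
  · exact (inv_mul_inv_mul_le_add_of_le hjQ hjS).trans le_add_self
  · rw [add_zero]
    exact inv_mul_inv_mul_le_of_not_isNearPair ν hφ hker hQ hS hnear (hfar hnear)

theorem lintegral_condCk_univ_sq_le {X Ω : Type*} [MetricSpace X] [MeasurableSpace X]
    [MeasurableSpace Ω] (P : Measure Ω) (B : Ω → Set X) {𝒬 : Set (Set X)}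
    (h𝒬 : 𝒬.Countable) (hm : ∀ Q ∈ 𝒬, MeasurableSet Q) (hd : 𝒬.PairwiseDisjoint id)
    (hhit : ∀ Q ∈ 𝒬, MeasurableSet {ω | (B ω ∩ Q).Nonempty})
    {φ : ℝ → ℝ≥0∞} (hφ : AntitoneOn φ (Ici 0)) {a : ℝ≥0} (ha : a ≠ 0)
    (hcap : ∀ Q ∈ 𝒬, a * phiCapacity φ Q ≤ hitProb P B Q)
    {δ : ℝ} {c c₂ c₃ : ℝ≥0∞} (hker : ∀ r : ℝ, 0 < r → φ r ≤ c₂ * φ (r * (1 + 2 * δ)) + c₃)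
    (hind : ∀ Q ∈ 𝒬, ∀ S ∈ 𝒬, ¬IsNearPair δ Q S →
      P {ω | (B ω ∩ Q).Nonempty ∧ (B ω ∩ S).Nonempty}
        ≤ c * hitProb P B Q * hitProb P B S * φ (setEDist Q S).toReal)
    {M : ℕ} (hM : ∀ Q ∈ 𝒬, {S | S ∈ 𝒬 ∧ IsNearPair δ Q S}.encard ≤ M)
    (ν : Measure X) [IsFiniteMeasure ν] :
    ∫⁻ ω, condCk P B 𝒬 ν univ ω ^ 2 ∂P
      ≤ (c * c₂ + 2 * (a : ℝ≥0∞)⁻¹ * M) * phiEnergy φ ν + c * c₃ * ν univ ^ 2 := by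
  have : Countable 𝒬 := h𝒬.to_subtype
  have hdiag : ∑' Q : 𝒬, (hitProb P B Q)⁻¹ * ν Q ^ 2 ≤ (a : ℝ≥0∞)⁻¹ * phiEnergy φ ν :=
    calc ∑' Q : 𝒬, (hitProb P B Q)⁻¹ * ν Q ^ 2
        ≤ ∑' Q : 𝒬, (a : ℝ≥0∞)⁻¹ * ∫⁻ x in Q, ∫⁻ y, φ (dist x y) ∂ν ∂ν :=
          ENNReal.tsum_le_tsum fun Q =>
            (inv_mul_measure_sq_le_of_mul_phiCapacity_le φ ν (hm Q Q.2) ha (hcap Q Q.2)).trans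
              (by gcongr; exact phiEnergy_restrict_le φ ν Q)
      _ ≤ (a : ℝ≥0∞)⁻¹ * phiEnergy φ ν := by
          rw [ENNReal.tsum_mul_left]
          gcongr
          exact tsum_setLIntegral_le_lintegral h𝒬 hm hd _
  have hnear : ∀ Q : 𝒬, {S : 𝒬 | IsNearPair δ (Q : Set X) S}.encard ≤ M := fun Q =>
    calc {S : 𝒬 | IsNearPair δ (Q : Set X) S}.encard
        = (Subtype.val '' {S : 𝒬 | IsNearPair δ (Q : Set X) S}).encard :=
          (Subtype.val_injective.encard_image _).symm
      _ ≤ M := (Set.encard_mono (by rintro _ ⟨S, hS, rfl⟩; exact ⟨S.2, hS⟩)).trans (hM Q Q.2)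
  rw [lintegral_condCk_sq P B h𝒬 hhit]
  simp only [inter_univ]
  calc _ ≤ ∑' (Q : 𝒬) (S : 𝒬), (c * c₂ * ∫⁻ x in Q, ∫⁻ y in S, φ (dist x y) ∂ν ∂ν
          + c * c₃ * (ν Q * ν S) + if IsNearPair δ (Q : Set X) S then
            (hitProb P B Q)⁻¹ * ν Q ^ 2 + (hitProb P B S)⁻¹ * ν S ^ 2 else 0) :=
        ENNReal.tsum_le_tsum fun Q => ENNReal.tsum_le_tsum fun S =>
          inv_mul_inv_mul_le_add_add_ite ν hφ hker (hm Q Q.2) (hm S S.2)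
            (measure_mono fun _ h => h.1) (measure_mono fun _ h => h.2) (hind Q Q.2 S S.2)
    _ = c * c₂ * ∑' (Q : 𝒬) (S : 𝒬), ∫⁻ x in Q, ∫⁻ y in S, φ (dist x y) ∂ν ∂ν
          + c * c₃ * ((∑' Q : 𝒬, ν Q) * ∑' S : 𝒬, ν S)
          + ∑' (Q : 𝒬) (S : 𝒬), (if IsNearPair δ (Q : Set X) S then
            (hitProb P B Q)⁻¹ * ν Q ^ 2 + (hitProb P B S)⁻¹ * ν S ^ 2 else 0) := by
        simp only [ENNReal.tsum_add, ENNReal.tsum_mul_left, ENNReal.tsum_mul_right]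
    _ ≤ c * c₂ * phiEnergy φ ν + c * c₃ * (ν univ * ν univ)
          + 2 * M * ((a : ℝ≥0∞)⁻¹ * phiEnergy φ ν) := by
        gcongr
        · exact tsum_tsum_setLIntegral_setLIntegral_le h𝒬 hm hd _
        · exact tsum_measure_le_measure_univ_of_pairwiseDisjoint h𝒬 hm hd
        · exact tsum_measure_le_measure_univ_of_pairwiseDisjoint h𝒬 hm hd
        · exact (tsum_tsum_ite_add_le (fun _ _ h => h.symm) hnear _).trans (by gcongr)
    _ = _ := by ring

theorem condCk_sq_expectation_le_general
    {X : Type*} [MetricSpace X] [MeasurableSpace X]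
    {Ω : Type*} [MeasurableSpace Ω] (P : Measure Ω)
    (B : Ω → Set X) (𝒬 : ℕ → Set (Set X))
    (hcount : ∀ k, (𝒬 k).Countable)
    (hQmeas : ∀ k, ∀ Q ∈ 𝒬 k, MeasurableSet Q)
    (hQdisj : ∀ k, ∀ Q ∈ 𝒬 k, ∀ S ∈ 𝒬 k, Q ≠ S → Q ∩ S = ∅)
    (hhitmeas : ∀ k, ∀ Q ∈ 𝒬 k, MeasurableSet {ω | (B ω ∩ Q).Nonempty})
    (φ : ℝ → ENNReal)
    (hφanti : AntitoneOn φ (Set.Ici (0 : ℝ)))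
    (a : NNReal) (ha : 0 < a)
    (hcap : ∀ k, ∀ Q ∈ 𝒬 k,
      (a : ENNReal) * phiCapacity φ Q ≤ P {ω | (B ω ∩ Q).Nonempty})
    (δ : ℝ)
    (c₂ c₃ : NNReal)
    (hker : ∀ r : ℝ, 0 < r → φ r ≤ (c₂ : ENNReal) * φ (r * (1 + 2 * δ)) + (c₃ : ENNReal))
    (c : NNReal)
    (hindep : ∀ k n : ℕ, ∀ Q ∈ 𝒬 k, ∀ S ∈ 𝒬 n,
      max (EMetric.diam Q) (EMetric.diam S) < ENNReal.ofReal δ * setEDist Q S →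
      P {ω | (B ω ∩ Q).Nonempty ∧ (B ω ∩ S).Nonempty}
        ≤ (c : ENNReal) * P {ω | (B ω ∩ Q).Nonempty} * P {ω | (B ω ∩ S).Nonempty} *
            φ (setEDist Q S).toReal)
    (Mδ : ℕ)
    (hMδ : ∀ k, ∀ Q ∈ 𝒬 k,
      {S | S ∈ 𝒬 k ∧
        ENNReal.ofReal δ * setEDist Q S ≤ max (EMetric.diam Q) (EMetric.diam S)}.encard
        ≤ (Mδ : ℕ∞))
    (ν : Measure X) [IsFiniteMeasure ν] (k : ℕ) :
    ∫⁻ ω, (condCk P B (𝒬 k) ν Set.univ ω) ^ 2 ∂P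
      ≤ ((c : ENNReal) * (c₂ : ENNReal) + 2 * (a : ENNReal)⁻¹ * (Mδ : ENNReal)) *
          phiEnergy φ ν
        + (c : ENNReal) * (c₃ : ENNReal) * (ν Set.univ) ^ 2 :=
  lintegral_condCk_univ_sq_le P B (hcount k) (hQmeas k)
    (fun Q hQ S hS hQS => Set.disjoint_iff_inter_eq_empty.mpr (hQdisj k Q hQ S hS hQS))
    (hhitmeas k) hφanti ha.ne' (hcap k) hker
    (fun Q hQ S hS hfar => hindep k k Q hQ S hS (not_le.mp hfar)) (hMδ k) ν

/-- **`L²`-boundedness of the approximating conditional measures.**  Under the standing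
assumptions on the kernel `φ`, the families `𝒬_k` and the random set `B` (capacity lower
bound for hitting probabilities, kernel doubling, correlation bound, bounded number of
`δ`-close pairs), for every finite Borel measure `ν` and every `k`,
`E(𝒞_k(ν)(X)²) ≤ (c·c₂ + 2a⁻¹·M_δ)·I_φ(ν) + c·c₃·ν(X)²`. -/
theorem condCk_sq_expectation_le
    {X : Type*} [MetricSpace X] [CompleteSpace X] [TopologicalSpace.SeparableSpace X]
    [MeasurableSpace X] [BorelSpace X]
    {Ω : Type*} [MeasurableSpace Ω] (P : Measure Ω) [IsProbabilityMeasure P]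
    (B : Ω → Set X) (𝒬 : ℕ → Set (Set X))
    (hcount : ∀ k, (𝒬 k).Countable)
    (hQmeas : ∀ k, ∀ Q ∈ 𝒬 k, MeasurableSet Q)
    (hQdisj : ∀ k, ∀ Q ∈ 𝒬 k, ∀ S ∈ 𝒬 k, Q ≠ S → Q ∩ S = ∅)
    (hhitmeas : ∀ k, ∀ Q ∈ 𝒬 k, MeasurableSet {ω | (B ω ∩ Q).Nonempty})
    (hhitpos : ∀ k, ∀ Q ∈ 𝒬 k, 0 < P {ω | (B ω ∩ Q).Nonempty})
    (φ : ℝ → ENNReal)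
    (hφcont : ContinuousOn φ (Set.Ici (0 : ℝ)))
    (hφanti : AntitoneOn φ (Set.Ici (0 : ℝ)))
    (hφfin : ∀ r : ℝ, 0 < r → φ r ≠ ⊤)
    (a : NNReal) (ha : 0 < a)
    (hcap : ∀ k, ∀ Q ∈ 𝒬 k,
      (a : ENNReal) * phiCapacity φ Q ≤ P {ω | (B ω ∩ Q).Nonempty})
    (δ : ℝ) (hδ : 0 < δ)
    (c₂ c₃ : NNReal)
    (hker : ∀ r : ℝ, 0 < r → φ r ≤ (c₂ : ENNReal) * φ (r * (1 + 2 * δ)) + (c₃ : ENNReal))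
    (c : NNReal)
    (hindep : ∀ k n : ℕ, ∀ Q ∈ 𝒬 k, ∀ S ∈ 𝒬 n,
      max (EMetric.diam Q) (EMetric.diam S) < ENNReal.ofReal δ * setEDist Q S →
      P {ω | (B ω ∩ Q).Nonempty ∧ (B ω ∩ S).Nonempty}
        ≤ (c : ENNReal) * P {ω | (B ω ∩ Q).Nonempty} * P {ω | (B ω ∩ S).Nonempty} *
            φ (setEDist Q S).toReal)
    (Mδ : ℕ)
    (hMδ : ∀ k, ∀ Q ∈ 𝒬 k,
      {S | S ∈ 𝒬 k ∧
        ENNReal.ofReal δ * setEDist Q S ≤ max (EMetric.diam Q) (EMetric.diam S)}.encard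
        ≤ (Mδ : ℕ∞))
    (ν : Measure X) [IsFiniteMeasure ν] (k : ℕ) :
    ∫⁻ ω, (condCk P B (𝒬 k) ν Set.univ ω) ^ 2 ∂P
      ≤ ((c : ENNReal) * (c₂ : ENNReal) + 2 * (a : ENNReal)⁻¹ * (Mδ : ENNReal)) *
          phiEnergy φ ν
        + (c : ENNReal) * (c₃ : ENNReal) * (ν Set.univ) ^ 2 :=
  condCk_sq_expectation_le_general P B 𝒬 hcount hQmeas hQdisj hhitmeas φ hφanti a ha hcap δ c₂ c₃
    hker c hindep Mδ hMδ ν k
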